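/- arXiv:1212.5698 — 2 statements merged into one kernel-verified Lean document; each statement's English description precedes it below -/
import Mathlib

section
/- The degree function deg: Bir(P^n) → ℕ is lower semicontinuous for the Zariski topology on Bir(P^n): for every d ≥ 1, the set Bir(P^n)_{≤d} of birational maps of degree ≤ d is closed. Moreover, a subset F ⊆ Bir(P^n) is closed if and only if F ∩ Bir(P^n)_{≤d} is closed for every d > 0. -/
open MvPolynomial

/-- The rational function field `k(z_1,…,z_n)`, realized as the fraction field of the
polynomial ring in `n` variables over `k`. -/
abbrev RatFunField (k : Type) [Field k] (n : ℕ) : Type :=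
  FractionRing (MvPolynomial (Fin n) k)

/-- The Cremona group `Bir(ℙⁿ)`, realized as the group of `k`-algebra automorphisms of
the rational function field `k(z_1,…,z_n)`. -/
abbrev Cremona (k : Type) [Field k] (n : ℕ) : Type :=
  RatFunField k n ≃ₐ[k] RatFunField k n

variable (k : Type) [Field k]

/-- The coordinate function `z_{j+1}` of `k(z_1,…,z_n)`. -/
noncomputable def zCoord (n : ℕ) (j : Fin n) : RatFunField k n :=
  algebraMap (MvPolynomial (Fin n) k) (RatFunField k n) (X j)

/-- Dehomogenization: `g(x_0,…,x_n) ↦ g(1, z_1, …, z_n)`. -/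
noncomputable def dehom (n : ℕ) : MvPolynomial (Fin (n + 1)) k →ₐ[k] RatFunField k n :=
  aeval (Fin.cons 1 (zCoord k n))

/-- `g = (g_0,…,g_n)` is a representation of the Cremona transformation `f` by homogeneous
polynomials of degree `d`: the `g_i` are homogeneous of degree `d`, `g_0 ≠ 0`, and
`f(z_j) = g_j(1,z_1,…,z_n)/g_0(1,z_1,…,z_n)` for all `j`. -/
def Represents (n : ℕ) (f : Cremona k n) (d : ℕ)
    (g : Fin (n + 1) → MvPolynomial (Fin (n + 1)) k) : Prop :=
  (∀ i, (g i).IsHomogeneous d) ∧ g 0 ≠ 0 ∧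
    ∀ j : Fin n, f (zCoord k n j) * dehom k n (g 0) = dehom k n (g j.succ)

/-- The (algebraic) degree of a Cremona transformation: the least `d ≥ 1` such that `f`
admits a representation by homogeneous polynomials of degree `d` (without common factor,
which is automatic at the minimal degree). -/
noncomputable def cdeg (n : ℕ) (f : Cremona k n) : ℕ :=
  sInf {d | 1 ≤ d ∧ ∃ g, Represents k n f d g}

/-- An affine `k`-variety: the maximal spectrum (= set of `k`-points) of a finitely
generated `k`-algebra `A`. -/
structure AffSource (k : Type) [Field k] : Type 1 where
  A : Type
  [cr : CommRing A]
  [alg : Algebra k A]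
  [ft : Algebra.FiniteType k A]

attribute [instance] AffSource.cr AffSource.alg AffSource.ft

/-- The points (with residue field `k`) of an affine `k`-variety, i.e. the `k`-algebra
homomorphisms `A → k`; by the Nullstellensatz these correspond to the maximal ideals. -/
abbrev AffSource.Pts (S : AffSource k) : Type := S.A →ₐ[k] k

/-- The Zariski topology on the points of an affine variety, induced from the Zariski
topology of the prime spectrum via `t ↦ ker t`. -/
noncomputable instance AffSource.ptsTopology (S : AffSource k) : TopologicalSpace S.Pts :=
  TopologicalSpace.induced
    (fun t : S.Pts =>
      (⟨RingHom.ker (t : S.A →+* k), RingHom.ker_isPrime _⟩ : PrimeSpectrum S.A))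
    inferInstance

/-- `φ` is given by the polynomial family `F = (F_0,…,F_n)`, homogeneous of common degree
`ℓ` in `x_0,…,x_n` with coefficients in `A`, on the basic open subset `D(a)`: for every
point `t` with `a(t) ≠ 0`, the evaluated polynomials `F_i(t,·)` are not all zero and
`φ_t(z_j)·F_0(t,1,z_1,…,z_n) = F_j(t,1,z_1,…,z_n)` for all `j`. -/
def IsFamilyOn (n : ℕ) (S : AffSource k) (φ : S.Pts → Cremona k n) (a : S.A)
    (ℓ : ℕ) (F : Fin (n + 1) → MvPolynomial (Fin (n + 1)) S.A) : Prop :=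
  (∀ i, (F i).IsHomogeneous ℓ) ∧
    ∀ t : S.Pts, t a ≠ 0 →
      (∃ i, MvPolynomial.map (t : S.A →+* k) (F i) ≠ 0) ∧
        ∀ j : Fin n,
          φ t (zCoord k n j) * dehom k n (MvPolynomial.map (t : S.A →+* k) (F 0)) =
            dehom k n (MvPolynomial.map (t : S.A →+* k) (F j.succ))

/-- A morphism `T → Bir(ℙⁿ)` from an affine `k`-variety `T`: a map which, locally on a
cover of `T` by basic open subsets, is given by a polynomial family of Cremona
transformations. -/
def IsMorphism (n : ℕ) (S : AffSource k) (φ : S.Pts → Cremona k n) : Prop :=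
  ∀ t : S.Pts, ∃ a : S.A, t a ≠ 0 ∧ ∃ ℓ F, IsFamilyOn k n S φ a ℓ F

/-- The Zariski topology on the Cremona group: the finest topology making every morphism
from a `k`-variety to `Bir(ℙⁿ)` continuous.  (A subset is closed if and only if its
preimage under every such morphism is closed.) -/
noncomputable instance cremonaTopology (n : ℕ) : TopologicalSpace (Cremona k n) :=
  ⨆ (S : AffSource k) (φ : { φ : S.Pts → Cremona k n // IsMorphism k n S φ }),
    TopologicalSpace.coinduced φ.1 inferInstance

/-! Where a morphism `φ` is given on `D(a)` by a family `F` of degree `ℓ`, and `d ≥ 1`,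
`deg φ_t ≤ d` iff there are forms `g_0, …, g_n` of degree `d`, not all zero, with
`g_{j+1} F_0(t) = g_0 F_{j+1}(t)` (cross-multiplying is reversible because dehomogenization is
injective on forms of a fixed degree). This is a linear system in the coefficients of the `g_i`
whose matrix has entries in the coordinate ring; it has only the trivial solution iff some maximal
minor is nonzero at `t`, an open condition in `t`. Finally `deg φ_t ≤ ℓ + 1` on `D(a)`, so there
`φ⁻¹ F = φ⁻¹ (F ∩ Bir_{≤ ℓ+1})`, which reduces the closedness of `F` to that of its truncations.
-/

namespace Finsupp

theorem eq_of_tail_eq_of_degree_eq {m : ℕ} {μ ν : Fin (m + 1) →₀ ℕ}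
    (htail : tail μ = tail ν) (hdeg : μ.degree = ν.degree) : μ = ν := by
  have hsum : ∑ i : Fin m, μ i.succ = ∑ i : Fin m, ν i.succ := by
    simpa only [tail_apply] using congrArg (fun κ : Fin m →₀ ℕ => ∑ i, κ i) htail
  have h0 : μ 0 = ν 0 := by
    rw [degree_eq_sum, degree_eq_sum, Fin.sum_univ_succ, Fin.sum_univ_succ, hsum] at hdeg
    omega
  rw [← cons_tail μ, ← cons_tail ν, h0, htail]

end Finsupp

namespace MvPolynomial

section Dehomogenize

variable {R : Type*} [CommSemiring R] {m ℓ : ℕ}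

noncomputable def dehomogenize (R : Type*) [CommSemiring R] (m : ℕ) :
    MvPolynomial (Fin (m + 1)) R →ₐ[R] MvPolynomial (Fin m) R :=
  aeval (Fin.cons 1 X)

theorem dehomogenize_monomial (μ : Fin (m + 1) →₀ ℕ) (c : R) :
    dehomogenize R m (monomial μ c) = monomial (Finsupp.tail μ) c := by
  rw [dehomogenize, aeval_monomial, monomial_eq, Finsupp.prod_pow, Finsupp.prod_pow,
    Fin.prod_univ_succ, Fin.cons_zero, one_pow, one_mul, algebraMap_eq]
  simp only [Fin.cons_succ, Finsupp.tail_apply]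

theorem IsHomogeneous.coeff_tail_dehomogenize {g : MvPolynomial (Fin (m + 1)) R}
    (hg : g.IsHomogeneous ℓ) {μ : Fin (m + 1) →₀ ℕ} (hμ : μ.degree = ℓ) :
    coeff (Finsupp.tail μ) (dehomogenize R m g) = coeff μ g := by
  classical
  conv_lhs => rw [g.as_sum, map_sum]
  simp only [dehomogenize_monomial, coeff_sum, coeff_monomial]
  refine (Finset.sum_eq_single μ (fun ν hν hne => if_neg fun h => hne ?_) fun hμ' => ?_).trans
    (if_pos rfl)
  · refine Finsupp.eq_of_tail_eq_of_degree_eq h (hμ ▸ ?_)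
    by_contra hdeg
    exact mem_support_iff.mp hν (hg.coeff_eq_zero hdeg)
  · rw [if_pos rfl, notMem_support_iff.mp hμ']

theorem IsHomogeneous.eq_zero_of_dehomogenize_eq_zero {g : MvPolynomial (Fin (m + 1)) R}
    (hg : g.IsHomogeneous ℓ) (h : dehomogenize R m g = 0) : g = 0 := by
  ext μ
  by_cases hμ : μ.degree = ℓ
  · rw [← hg.coeff_tail_dehomogenize hμ, h, coeff_zero, coeff_zero]
  · rw [hg.coeff_eq_zero hμ, coeff_zero]

end Dehomogenize

section LinearSystem

open scoped Matrix

variable {σ : Type*} [Finite σ] {R : Type*} [CommRing R] {β ι : Type*} {d ℓ : ℕ}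

noncomputable def monomialsOfDegree (σ : Type*) [Finite σ] (d : ℕ) : Finset (σ →₀ ℕ) :=
  (Finsupp.finite_of_degree_eq d).toFinset

theorem mem_monomialsOfDegree {μ : σ →₀ ℕ} : μ ∈ monomialsOfDegree σ d ↔ μ.degree = d :=
  Set.Finite.mem_toFinset _

noncomputable def ofCoeffs (v : β × monomialsOfDegree σ d → R) (j : β) : MvPolynomial σ R :=
  ∑ μ : monomialsOfDegree σ d, monomial μ (v (j, μ))

theorem isHomogeneous_ofCoeffs (v : β × monomialsOfDegree σ d → R) (j : β) :
    (ofCoeffs v j).IsHomogeneous d :=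
  IsHomogeneous.sum _ _ _ fun μ _ => isHomogeneous_monomial _ (mem_monomialsOfDegree.mp μ.2)

theorem coeff_ofCoeffs (v : β × monomialsOfDegree σ d → R) (j : β) (μ : monomialsOfDegree σ d) :
    coeff μ (ofCoeffs v j) = v (j, μ) := by
  classical
  rw [ofCoeffs, coeff_sum, Finset.sum_eq_single μ (fun ν _ hne => ?_) (by simp)]
  · rw [coeff_monomial, if_pos rfl]
  · rw [coeff_monomial, if_neg (fun h => hne (Subtype.ext h))]

theorem ofCoeffs_coeff {g : β → MvPolynomial σ R} (hg : ∀ j, (g j).IsHomogeneous d) :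
    ofCoeffs (fun q : β × monomialsOfDegree σ d => coeff q.2 (g q.1)) = g := by
  funext j
  ext μ
  by_cases hμ : μ.degree = d
  · exact coeff_ofCoeffs _ j ⟨μ, mem_monomialsOfDegree.mpr hμ⟩
  · rw [(isHomogeneous_ofCoeffs _ j).coeff_eq_zero hμ, (hg j).coeff_eq_zero hμ]

/-- The matrix, in the monomial bases of degrees `d` and `e`, of the linear map
`g ↦ (∑ j, g j * E i j)ᵢ`. -/
noncomputable def coeffMatrix (E : ι → β → MvPolynomial σ R) (d e : ℕ) :
    Matrix (ι × monomialsOfDegree σ e) (β × monomialsOfDegree σ d) R :=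
  fun p q => coeff p.2 (monomial q.2 1 * E p.1 q.1)

theorem coeffMatrix_map {S : Type*} [CommRing S] (f : R →+* S) (E : ι → β → MvPolynomial σ R)
    (d e : ℕ) : (coeffMatrix E d e).map f = coeffMatrix (fun i j => map f (E i j)) d e := by
  ext p q
  simp only [coeffMatrix, Matrix.map_apply, ← coeff_map, map_mul, map_monomial, map_one]

theorem coeffMatrix_mulVec [Fintype β] (E : ι → β → MvPolynomial σ R) (e : ℕ)
    (v : β × monomialsOfDegree σ d → R) (p : ι × monomialsOfDegree σ e) :
    (coeffMatrix E d e *ᵥ v) p = coeff p.2 (∑ j, ofCoeffs v j * E p.1 j) := by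
  simp only [Matrix.mulVec, dotProduct, Fintype.sum_prod_type, ofCoeffs, Finset.sum_mul,
    coeff_sum, coeffMatrix]
  refine Finset.sum_congr rfl fun j _ => Finset.sum_congr rfl fun μ _ => ?_
  rw [← mul_one (v (j, μ)), ← C_mul_monomial, mul_one, mul_assoc, coeff_C_mul, mul_comm]

theorem coeffMatrix_mulVec_eq_zero_iff [Fintype β] {E : ι → β → MvPolynomial σ R}
    (hE : ∀ i j, (E i j).IsHomogeneous ℓ) (v : β × monomialsOfDegree σ d → R) :
    coeffMatrix E d (d + ℓ) *ᵥ v = 0 ↔ ∀ i, ∑ j, ofCoeffs v j * E i j = 0 := by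
  constructor
  · intro h i
    have hhom : (∑ j, ofCoeffs v j * E i j).IsHomogeneous (d + ℓ) :=
      IsHomogeneous.sum _ _ _ fun j _ => (isHomogeneous_ofCoeffs v j).mul (hE i j)
    ext μ
    by_cases hμ : μ.degree = d + ℓ
    · exact (coeffMatrix_mulVec E _ v (i, ⟨μ, mem_monomialsOfDegree.mpr hμ⟩)).symm.trans
        (congrFun h _)
    · exact hhom.coeff_eq_zero hμ
  · intro h
    ext p
    rw [coeffMatrix_mulVec, h, coeff_zero]
    rfl

theorem exists_ne_zero_coeffMatrix_mulVec_eq_zero_iff [Fintype β] {E : ι → β → MvPolynomial σ R}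
    (hE : ∀ i j, (E i j).IsHomogeneous ℓ) :
    (∃ v ≠ 0, coeffMatrix E d (d + ℓ) *ᵥ v = 0) ↔
      ∃ g : β → MvPolynomial σ R,
        (∀ j, (g j).IsHomogeneous d) ∧ g ≠ 0 ∧ ∀ i, ∑ j, g j * E i j = 0 := by
  constructor
  · rintro ⟨v, hv, hker⟩
    refine ⟨ofCoeffs v, isHomogeneous_ofCoeffs v, fun h => hv ?_,
      (coeffMatrix_mulVec_eq_zero_iff hE v).mp hker⟩
    ext q
    rw [← coeff_ofCoeffs v q.1 q.2, h]
    rfl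
  · rintro ⟨g, hg, hne, hrel⟩
    refine ⟨fun q => coeff q.2 (g q.1), fun hv => hne ?_, ?_⟩
    · rw [← ofCoeffs_coeff hg, hv]
      funext j
      simp [ofCoeffs]
    · rw [coeffMatrix_mulVec_eq_zero_iff hE, ofCoeffs_coeff hg]
      exact hrel

end LinearSystem

end MvPolynomial

theorem Matrix.exists_submatrix_det_ne_zero {K ι κ : Type*} [Field K] [Fintype ι] [Fintype κ]
    [DecidableEq κ] (M : Matrix ι κ K) (hM : Function.Injective M.mulVec) :
    ∃ r : κ → ι, (M.submatrix r id).det ≠ 0 := by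
  -- `M` has full column rank, so `card κ` of its rows form a basis of `κ → K`.
  obtain ⟨ρ, a, ha, hspan, hli⟩ := exists_linearIndependent' K M.row
  have : Fintype ρ := Fintype.ofInjective a ha
  have hcard : Fintype.card ρ = Fintype.card κ := by
    rw [linearIndependent_iff_card_eq_finrank_span.mp hli, Set.finrank, hspan,
      ← rank_eq_finrank_span_row, rank,
      LinearMap.finrank_range_of_inj (by simpa only [coe_mulVecLin] using hM),
      Module.finrank_fintype_fun_eq_card]
  let e := Fintype.equivOfCardEq hcard.symm
  refine ⟨a ∘ e, ((isUnit_iff_isUnit_det _).mp (linearIndependent_rows_iff_isUnit.mp ?_)).ne_zero⟩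
  exact hli.comp e e.injective

section CrossRelations

variable {R : Type*} [CommRing R] {n : ℕ}

noncomputable def crossRelations (G : Fin (n + 1) → MvPolynomial (Fin (n + 1)) R) (j : Fin n) :
    Fin (n + 1) → MvPolynomial (Fin (n + 1)) R :=
  Pi.single j.succ (G 0) - Pi.single 0 (G j.succ)

theorem sum_mul_crossRelations (g G : Fin (n + 1) → MvPolynomial (Fin (n + 1)) R) (j : Fin n) :
    ∑ i, g i * crossRelations G j i = g j.succ * G 0 - g 0 * G j.succ := by
  simp [crossRelations, mul_sub, Finset.sum_sub_distrib, Pi.single_apply]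

theorem isHomogeneous_crossRelations {ℓ : ℕ} {G : Fin (n + 1) → MvPolynomial (Fin (n + 1)) R}
    (hG : ∀ i, (G i).IsHomogeneous ℓ) (j : Fin n) (i : Fin (n + 1)) :
    (crossRelations G j i).IsHomogeneous ℓ := by
  simp only [crossRelations, Pi.sub_apply, Pi.single_apply]
  split_ifs <;> simp [hG, isHomogeneous_zero, IsHomogeneous.neg, IsHomogeneous.sub]

theorem map_crossRelations {S : Type*} [CommRing S] (f : R →+* S)
    (G : Fin (n + 1) → MvPolynomial (Fin (n + 1)) R) (j : Fin n) (i : Fin (n + 1)) :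
    map f (crossRelations G j i) = crossRelations (fun i => map f (G i)) j i := by
  simp only [crossRelations, Pi.sub_apply, Pi.single_apply, map_sub, apply_ite (map f),
    map_zero]

end CrossRelations

variable {k} {n : ℕ}

theorem dehom_eq_algebraMap_dehomogenize (g : MvPolynomial (Fin (n + 1)) k) :
    dehom k n g = algebraMap (MvPolynomial (Fin n) k) (RatFunField k n) (dehomogenize k n g) := by
  rw [dehom, dehomogenize, ← IsScalarTower.coe_toAlgHom' k, ← AlgHom.comp_apply, comp_aeval]
  congr 2
  funext i
  refine Fin.cases ?_ (fun j => ?_) i <;> simp [zCoord]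

theorem injOn_dehom_setOf_isHomogeneous (ℓ : ℕ) :
    Set.InjOn (dehom k n) {g | g.IsHomogeneous ℓ} := by
  intro g hg g' hg' h
  refine sub_eq_zero.mp ((IsHomogeneous.sub hg hg').eq_zero_of_dehomogenize_eq_zero ?_)
  apply IsFractionRing.injective (MvPolynomial (Fin n) k) (RatFunField k n)
  rw [← dehom_eq_algebraMap_dehomogenize, map_sub, h, sub_self, map_zero]

section Represents

variable {f : Cremona k n} {ℓ d : ℕ} {G g : Fin (n + 1) → MvPolynomial (Fin (n + 1)) k}

theorem Represents.mul_X_zero_pow (h : Represents k n f d g) (e : ℕ) :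
    Represents k n f (d + e) (fun i => g i * X 0 ^ e) := by
  obtain ⟨hhom, h0, hrel⟩ := h
  have hX : dehom k n (X 0) = 1 := by rw [dehom, aeval_X, Fin.cons_zero]
  refine ⟨fun i => (hhom i).mul (isHomogeneous_X_pow _ _),
    mul_ne_zero h0 (pow_ne_zero _ (X_ne_zero _)), fun j => ?_⟩
  simpa only [map_mul, map_pow, hX, one_pow, mul_one] using hrel j

theorem cdeg_le_of_represents (hd : 1 ≤ d) (h : Represents k n f d g) : cdeg k n f ≤ d :=
  Nat.sInf_le ⟨hd, g, h⟩

theorem Represents.cdeg_mem (hG : Represents k n f ℓ G) :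
    cdeg k n f ∈ {d | 1 ≤ d ∧ ∃ g, Represents k n f d g} :=
  Nat.sInf_mem ⟨ℓ + 1, Nat.le_add_left 1 ℓ, _, hG.mul_X_zero_pow 1⟩

theorem Represents.one_le_cdeg (hG : Represents k n f ℓ G) : 1 ≤ cdeg k n f :=
  hG.cdeg_mem.1

theorem Represents.cdeg_le_iff (hG : Represents k n f ℓ G) (hd : 1 ≤ d) :
    cdeg k n f ≤ d ↔ ∃ g, Represents k n f d g := by
  refine ⟨fun hle => ?_, fun ⟨g, hg⟩ => cdeg_le_of_represents hd hg⟩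
  obtain ⟨-, g, hg⟩ := hG.cdeg_mem
  exact ⟨_, Nat.add_sub_of_le hle ▸ hg.mul_X_zero_pow (d - cdeg k n f)⟩

theorem Represents.represents_iff (hG : Represents k n f ℓ G)
    (hg : ∀ i, (g i).IsHomogeneous d) :
    Represents k n f d g ↔ g ≠ 0 ∧ ∀ j : Fin n, g j.succ * G 0 = g 0 * G j.succ := by
  obtain ⟨hGhom, hG0, hGrel⟩ := hG
  have hdG0 : dehom k n (G 0) ≠ 0 := fun h =>
    hG0 (injOn_dehom_setOf_isHomogeneous ℓ (hGhom 0) (isHomogeneous_zero _ _ _)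
      (h.trans (map_zero _).symm))
  constructor
  · rintro ⟨-, hg0, hgrel⟩
    refine ⟨fun h => hg0 (congrFun h 0), fun j => injOn_dehom_setOf_isHomogeneous (d + ℓ)
      ((hg _).mul (hGhom 0)) ((hg 0).mul (hGhom _)) ?_⟩
    simp only [map_mul, ← hgrel j, ← hGrel j]
    ring
  · rintro ⟨hne, hrel⟩
    have hg0 : g 0 ≠ 0 := fun h0 =>
      hne (funext fun i => Fin.cases h0 (fun j => by simpa [h0, hG0] using hrel j) i)
    refine ⟨hg, hg0, fun j => mul_right_cancel₀ hdG0 ?_⟩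
    calc f (zCoord k n j) * dehom k n (g 0) * dehom k n (G 0)
        = dehom k n (g 0) * (f (zCoord k n j) * dehom k n (G 0)) := by ring
      _ = dehom k n (g j.succ) * dehom k n (G 0) := by
        rw [hGrel j, ← map_mul, ← map_mul, hrel j]

open scoped Matrix in
theorem Represents.cdeg_le_iff_exists_ne_zero_mulVec_eq_zero (hG : Represents k n f ℓ G)
    (hd : 1 ≤ d) :
    cdeg k n f ≤ d ↔ ∃ v ≠ 0, coeffMatrix (crossRelations G) d (d + ℓ) *ᵥ v = 0 := by
  rw [hG.cdeg_le_iff hd,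
    exists_ne_zero_coeffMatrix_mulVec_eq_zero_iff (isHomogeneous_crossRelations hG.1)]
  simp only [sum_mul_crossRelations, sub_eq_zero]
  exact ⟨fun ⟨g, hg⟩ => ⟨g, hg.1, (hG.represents_iff hg.1).mp hg⟩,
    fun ⟨g, hhom, h⟩ => ⟨g, (hG.represents_iff hhom).mpr h⟩⟩

end Represents

namespace AffSource

variable {S : AffSource k}

theorem isOpen_setOf_ne_zero (b : S.A) : IsOpen {t : S.Pts | t b ≠ 0} :=
  isOpen_induced_iff.mpr
    ⟨_, (PrimeSpectrum.basicOpen b).isOpen, Set.ext fun _ => not_congr RingHom.mem_ker⟩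

theorem isOpen_setOf_injective_mulVec_map {ι κ : Type*} [Fintype ι] [Fintype κ]
    (M : Matrix ι κ S.A) :
    IsOpen {t : S.Pts | Function.Injective (M.map (t : S.A →+* k)).mulVec} := by
  classical
  refine isOpen_iff_forall_mem_open.mpr fun t ht => ?_
  obtain ⟨r, hr⟩ := (M.map (t : S.A →+* k)).exists_submatrix_det_ne_zero ht
  have hdet (s : S.Pts) :
      s (M.submatrix r id).det = ((M.map (s : S.A →+* k)).submatrix r id).det :=
    RingHom.map_det (s : S.A →+* k) _
  refine ⟨{s | s (M.submatrix r id).det ≠ 0}, fun s hs => ?_, isOpen_setOf_ne_zero _,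
    (hdet t).trans_ne hr⟩
  have hminor : Function.Injective ((M.map (s : S.A →+* k)).submatrix r id).mulVec :=
    Matrix.mulVec_injective_iff_isUnit.mpr
      ((Matrix.isUnit_iff_isUnit_det _).mpr (Ne.isUnit ((hdet s).symm.trans_ne hs)))
  exact fun v w hvw => hminor (congrArg (· ∘ r) hvw)

end AffSource

section Morphisms

variable {S : AffSource k} {φ : S.Pts → Cremona k n}

theorem IsMorphism.continuous (hφ : IsMorphism k n S φ) : Continuous φ :=
  continuous_iSup_rng (i := S) (continuous_iSup_rng (i := ⟨φ, hφ⟩) continuous_coinduced_rng)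

theorem isClosed_iff_forall_isMorphism {C : Set (Cremona k n)} :
    IsClosed C ↔ ∀ (S : AffSource k) (φ : S.Pts → Cremona k n),
      IsMorphism k n S φ → IsClosed (φ ⁻¹' C) :=
  ⟨fun hC _ _ hφ => hC.preimage hφ.continuous, fun h => isClosed_iSup_iff.mpr fun S =>
    isClosed_iSup_iff.mpr fun φ => isClosed_coinduced.mpr (h S φ.1 φ.2)⟩

variable {a : S.A} {ℓ : ℕ} {F : Fin (n + 1) → MvPolynomial (Fin (n + 1)) S.A} {t : S.Pts}

theorem IsFamilyOn.represents (hF : IsFamilyOn k n S φ a ℓ F) (ht : t a ≠ 0) :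
    Represents k n (φ t) ℓ (fun i => map (t : S.A →+* k) (F i)) := by
  obtain ⟨hhom, hpt⟩ := hF
  obtain ⟨⟨i, hi⟩, hrel⟩ := hpt t ht
  refine ⟨fun i => (hhom i).map _, fun (h0 : map (t : S.A →+* k) (F 0) = 0) => hi ?_, hrel⟩
  cases i using Fin.cases with
  | zero => exact h0
  | succ j =>
    refine injOn_dehom_setOf_isHomogeneous ℓ ((hhom _).map _) (isHomogeneous_zero _ _ _) ?_
    rw [← hrel j, h0, map_zero, mul_zero]

theorem IsFamilyOn.cdeg_le_succ (hF : IsFamilyOn k n S φ a ℓ F) (ht : t a ≠ 0) :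
    cdeg k n (φ t) ≤ ℓ + 1 :=
  cdeg_le_of_represents le_add_self ((hF.represents ht).mul_X_zero_pow 1)

theorem IsFamilyOn.cdeg_le_iff (hF : IsFamilyOn k n S φ a ℓ F) (ht : t a ≠ 0) {d : ℕ}
    (hd : 1 ≤ d) : cdeg k n (φ t) ≤ d ↔ ¬ Function.Injective
      ((coeffMatrix (crossRelations F) d (d + ℓ)).map (t : S.A →+* k)).mulVec := by
  rw [(hF.represents ht).cdeg_le_iff_exists_ne_zero_mulVec_eq_zero hd, coeffMatrix_map]
  simp only [map_crossRelations]
  rw [← Matrix.coe_mulVecLin, injective_iff_map_eq_zero]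
  simp only [not_forall, exists_prop, Matrix.mulVecLin_apply, and_comm]

end Morphisms

theorem isClosed_setOf_cdeg_le (d : ℕ) : IsClosed {f : Cremona k n | cdeg k n f ≤ d} := by
  refine isClosed_iff_forall_isMorphism.mpr fun S φ hφ => ?_
  refine isOpen_compl_iff.mp (isOpen_iff_forall_mem_open.mpr fun t ht => ?_)
  obtain ⟨a, hta, ℓ, F, hF⟩ := hφ t
  rcases Nat.eq_zero_or_pos d with rfl | hd
  · exact ⟨{s | s a ≠ 0}, fun s hs => Nat.not_le_of_lt (hF.represents hs).one_le_cdeg,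
      AffSource.isOpen_setOf_ne_zero a, hta⟩
  · refine ⟨{s | s a ≠ 0} ∩ {s | Function.Injective
        ((coeffMatrix (crossRelations F) d (d + ℓ)).map (s : S.A →+* k)).mulVec},
      fun s hs hle => (hF.cdeg_le_iff hs.1 hd).mp hle hs.2,
      (AffSource.isOpen_setOf_ne_zero a).inter (AffSource.isOpen_setOf_injective_mulVec_map _),
      hta, not_not.mp fun h => ht ((hF.cdeg_le_iff hta hd).mpr h)⟩

theorem isClosed_iff_forall_isClosed_inter_setOf_cdeg_le {C : Set (Cremona k n)} :
    IsClosed C ↔ ∀ d, 0 < d → IsClosed (C ∩ {f | cdeg k n f ≤ d}) := by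
  refine ⟨fun hC d _ => hC.inter (isClosed_setOf_cdeg_le d), fun h => ?_⟩
  refine isClosed_iff_forall_isMorphism.mpr fun S φ hφ => ?_
  refine isOpen_compl_iff.mp (isOpen_iff_forall_mem_open.mpr fun t ht => ?_)
  obtain ⟨a, hta, ℓ, F, hF⟩ := hφ t
  exact ⟨{s | s a ≠ 0} ∩ (φ ⁻¹' (C ∩ {f | cdeg k n f ≤ ℓ + 1}))ᶜ,
    fun s hs hsC => hs.2 ⟨hsC, hF.cdeg_le_succ hs.1⟩,
    (AffSource.isOpen_setOf_ne_zero a).inter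
      ((h _ ℓ.succ_pos).preimage hφ.continuous).isOpen_compl,
    hta, fun htC => ht htC.1⟩

theorem cdeg_lowerSemicontinuous_general (k : Type) [Field k] (n : ℕ) :
    (∀ d : ℕ, IsClosed {f : Cremona k n | cdeg k n f ≤ d}) ∧
    (∀ F : Set (Cremona k n),
      IsClosed F ↔ ∀ d : ℕ, 0 < d → IsClosed (F ∩ {f : Cremona k n | cdeg k n f ≤ d})) :=
  ⟨isClosed_setOf_cdeg_le, fun _ => isClosed_iff_forall_isClosed_inter_setOf_cdeg_le⟩

/-- The degree function `deg : Bir(ℙⁿ) → ℕ` is lower semicontinuous for the Zariski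
topology: for every `d` the set `Bir(ℙⁿ)_{≤ d}` of transformations of degree `≤ d` is
closed.  Moreover a subset `F ⊆ Bir(ℙⁿ)` is closed if and only if `F ∩ Bir(ℙⁿ)_{≤ d}`
is closed for every `d > 0`. -/
theorem cdeg_lowerSemicontinuous (k : Type) [Field k] [IsAlgClosed k]
    (n : ℕ) (hn : 1 ≤ n) :
    (∀ d : ℕ, IsClosed {f : Cremona k n | cdeg k n f ≤ d}) ∧
    (∀ F : Set (Cremona k n),
      IsClosed F ↔ ∀ d : ℕ, 0 < d → IsClosed (F ∩ {f : Cremona k n | cdeg k n f ≤ d})) :=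
  cdeg_lowerSemicontinuous_general k n
end

section
/- Let Y be a projective k-variety and let ψ: Y → Bir(P^n) be a morphism. Then the image ψ(Y) is closed in Bir(P^n) for the Zariski topology. -/
open MvPolynomial

variable (k : Type) [Field k]

/-- The Zariski topology on affine `N`-space `k^N`. -/
noncomputable instance affSpaceTopology (N : ℕ) : TopologicalSpace (Fin N → k) :=
  ⨆ p : MvPolynomial (Fin N) k,
    TopologicalSpace.induced (fun v => CofiniteTopology.of (eval v p)) inferInstance

/-- The Zariski topology on projective `N`-space `ℙᴺ(k)`. -/
noncomputable instance projSpaceTopology (N : ℕ) :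
    TopologicalSpace (Projectivization k (Fin (N + 1) → k)) :=
  TopologicalSpace.coinduced (Projectivization.mk' k) inferInstance

/-- `ψ` restricted to the subvariety `Z ⊆ ℙᴺ(k)` is a morphism to `Bir(ℙⁿ)`: around
every point of `Z` there are a homogeneous polynomial `a` not vanishing at that point
and a polynomial family whose coefficients are homogeneous polynomials on `k^{N+1}` of
the same degree as `a`, which defines `ψ` at all points of `Z` where `a` does not
vanish. -/
def IsProjMorphismOn (n N : ℕ) (Z : Set (Projectivization k (Fin (N + 1) → k)))
    (ψ : Projectivization k (Fin (N + 1) → k) → Cremona k n) : Prop :=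
  ∀ z ∈ Z, ∃ (r ℓ : ℕ) (a : MvPolynomial (Fin (N + 1)) k)
      (F : Fin (n + 1) → MvPolynomial (Fin (n + 1)) (MvPolynomial (Fin (N + 1)) k)),
    a.IsHomogeneous r ∧ (∀ i, (F i).IsHomogeneous ℓ) ∧
    (∀ i m', ((F i).coeff m').IsHomogeneous r) ∧
    (∀ v : { v : Fin (N + 1) → k // v ≠ 0 }, Projectivization.mk' k v = z →
      eval v.1 a ≠ 0) ∧
    ∀ (w : Projectivization k (Fin (N + 1) → k)) (v : { v : Fin (N + 1) → k // v ≠ 0 }),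
      Projectivization.mk' k v = w → w ∈ Z → eval v.1 a ≠ 0 →
        (∃ i, MvPolynomial.map (eval v.1) (F i) ≠ 0) ∧
        ∀ j : Fin n,
          ψ w (zCoord k n j) * dehom k n (MvPolynomial.map (eval v.1) (F 0)) =
            dehom k n (MvPolynomial.map (eval v.1) (F j.succ))


/-!
Let `φ : T → Bir(ℙⁿ)` be given near `t₀` by a family `F`, and let `(a, G)` run over the charts
of `ψ` on `ℙᴺ`. Then `φ_t = ψ[v]` iff `a(v) (F_{j+1}(t) G_0(v) - F_0(t) G_{j+1}(v)) = 0` for all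
charts and all `j`. The coefficients of these identities are forms in `v` depending regularly on
`t`, so `φ_t ∈ ψ(ℙᴺ)` iff this system of forms has a nontrivial common zero, which by the main
theorem of elimination theory is a closed condition on `t`.
-/

section Topology

open Topology

variable {k : Type} [Field k]

theorem Cremona.isClosed_iff {n : ℕ} {C : Set (Cremona k n)} :
    IsClosed C ↔ ∀ (S : AffSource k) (φ : S.Pts → Cremona k n), IsMorphism k n S φ →
      IsClosed (φ ⁻¹' C) := by
  simp only [← isOpen_compl_iff, ← Set.preimage_compl]
  change IsOpen[⨆ (S : AffSource k) (φ : { φ // IsMorphism k n S φ }), _] _ ↔ _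
  simp only [isOpen_iSup_iff, isOpen_coinduced, Subtype.forall]

theorem AffSource.isOpen_setOf_ne_zero_s17 (S : AffSource k) (f : S.A) :
    IsOpen {t : S.Pts | t f ≠ 0} :=
  isOpen_induced_iff.mpr ⟨PrimeSpectrum.basicOpen f, (PrimeSpectrum.basicOpen f).isOpen,
    Set.ext fun t => (not_congr (RingHom.mem_ker (f := (t : S.A →+* k)))).symm⟩

/- `⨆` in the lattice of topologies is the coarsest topology, and the constant polynomials
already induce the indiscrete one: closed subsets of `ℙᴺ` are `∅` and `ℙᴺ`. -/
theorem affSpaceTopology_eq_top (N : ℕ) : affSpaceTopology k N = ⊤ :=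
  top_unique <| le_iSup_of_le (C 0) <| by simp [induced_const]

theorem Projectivization.eq_empty_or_univ_of_isClosed {N : ℕ}
    {Z : Set (Projectivization k (Fin (N + 1) → k))} (hZ : IsClosed Z) :
    Z = ∅ ∨ Z = Set.univ := by
  have hindiscrete :
      (inferInstance : TopologicalSpace { v : Fin (N + 1) → k // v ≠ 0 }) = ⊤ := by
    change TopologicalSpace.induced _ (affSpaceTopology k (N + 1)) = ⊤
    rw [affSpaceTopology_eq_top, induced_top]
  have hopen := isOpen_coinduced.mp hZ.isOpen_compl
  have hsurj : Function.Surjective (Projectivization.mk' k (V := Fin (N + 1) → k)) := fun w =>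
    ⟨⟨w.rep, w.rep_nonzero⟩, by rw [Projectivization.mk'_eq_mk, Projectivization.mk_rep]⟩
  rw [hindiscrete, TopologicalSpace.isOpen_top_iff, ← Set.preimage_empty,
    ← Set.preimage_univ, hsurj.preimage_injective.eq_iff, hsurj.preimage_injective.eq_iff,
    Set.compl_empty_iff, Set.compl_univ_iff] at hopen
  exact hopen.symm

end Topology

namespace MvPolynomial

variable {R σ τ : Type*} [CommSemiring R]

theorem IsHomogeneous.eval_smul {p : MvPolynomial σ R} {d : ℕ}
    (hp : p.IsHomogeneous d) (c : R) (x : σ → R) : eval (c • x) p = c ^ d * eval x p := by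
  rw [eval_eq, eval_eq, Finset.mul_sum]
  refine Finset.sum_congr rfl fun m hm => ?_
  simp only [Pi.smul_apply, smul_eq_mul, mul_pow, Finset.prod_mul_distrib,
    Finset.prod_pow_eq_pow_sum, ← hp.degree_eq_sum_deg_support hm]
  ring

theorem isHomogeneous_coeff_mul {P Q : MvPolynomial τ (MvPolynomial σ R)} {d e : ℕ}
    (hP : ∀ m, (P.coeff m).IsHomogeneous d) (hQ : ∀ m, (Q.coeff m).IsHomogeneous e)
    (m : τ →₀ ℕ) : ((P * Q).coeff m).IsHomogeneous (d + e) := by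
  classical
  rw [coeff_mul]
  exact IsHomogeneous.sum _ _ _ fun x _ => (hP x.1).mul (hQ x.2)

theorem mem_span_monomial_mul_of_mem_ideal_span {ι : Type*} {g : ι → MvPolynomial σ R}
    {dg : ι → ℕ} (hg : ∀ b, (g b).IsHomogeneous (dg b)) {p : MvPolynomial σ R} {E : ℕ}
    (hp : p.IsHomogeneous E) (hmem : p ∈ Ideal.span (Set.range g)) :
    p ∈ Submodule.span R (Set.range fun q : {q : ι × (σ →₀ ℕ) // q.2.degree + dg q.1 = E} =>
      monomial q.1.2 1 * g q.1.1) := by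
  set V := Submodule.span R (Set.range fun q : {q : ι × (σ →₀ ℕ) // q.2.degree + dg q.1 = E} =>
      monomial q.1.2 1 * g q.1.1)
  have hmonomial : ∀ b μ, homogeneousComponent E (monomial μ 1 * g b) ∈ V := by
    intro b μ
    rw [homogeneousComponent_of_mem ((isHomogeneous_monomial 1 rfl).mul (hg b))]
    split_ifs with h
    · exact Submodule.subset_span ⟨⟨(b, μ), h.symm⟩, rfl⟩
    · exact V.zero_mem
  have hmul : ∀ b c, homogeneousComponent E (c * g b) ∈ V := by
    intro b c
    rw [c.as_sum, Finset.sum_mul, map_sum]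
    refine V.sum_mem fun μ _ => ?_
    rw [show monomial μ (coeff μ c) * g b = coeff μ c • (monomial μ 1 * g b) by
      rw [smul_eq_C_mul, ← mul_assoc, C_mul_monomial, mul_one], map_smul]
    exact V.smul_mem _ (hmonomial b μ)
  obtain ⟨c, rfl⟩ := Finsupp.mem_ideal_span_range_iff_exists_finsupp.mp hmem
  rw [← homogeneousComponent_eq_self hp, Finsupp.sum, map_sum]
  exact V.sum_mem fun b _ => hmul b (c b)

end MvPolynomial

section Dehomogenization

variable {k : Type} [Field k] {n : ℕ}

theorem dehom_eq_algebraMap_aeval (p : MvPolynomial (Fin (n + 1)) k) :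
    dehom k n p = algebraMap _ (RatFunField k n)
      (aeval (Fin.cons 1 X : Fin (n + 1) → MvPolynomial (Fin n) k) p) := by
  change _ = IsScalarTower.toAlgHom k (MvPolynomial (Fin n) k) (RatFunField k n) _
  rw [← AlgHom.comp_apply, comp_aeval, dehom]
  congr 2
  funext i
  refine Fin.cases ?_ (fun j => ?_) i <;> simp [zCoord]

theorem eval_aeval_cons_one_X (y : Fin n → k) (p : MvPolynomial (Fin (n + 1)) k) :
    eval y (aeval (Fin.cons 1 X : Fin (n + 1) → MvPolynomial (Fin n) k) p) =
      eval (Fin.cons 1 y) p := by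
  rw [aeval_eq_bind₁, eval, eval₂Hom_bind₁, eval]
  congr 2
  funext i
  refine Fin.cases ?_ (fun j => ?_) i <;> simp

theorem eq_zero_of_isHomogeneous_of_dehom_eq_zero [Infinite k]
    {p : MvPolynomial (Fin (n + 1)) k} {d : ℕ} (hp : p.IsHomogeneous d)
    (h : dehom k n p = 0) : p = 0 := by
  rw [dehom_eq_algebraMap_aeval,
    IsFractionRing.to_map_eq_zero_iff (K := RatFunField k n)] at h
  -- `p` vanishes where `x₀ ≠ 0` (scale to `x₀ = 1`), so `x₀ * p` vanishes everywhere
  have hvanish : ∀ x : Fin (n + 1) → k, eval x (X 0 * p) = 0 := by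
    intro x
    rcases eq_or_ne (x 0) 0 with hx | hx
    · simp [hx]
    have hscale : x = x 0 • Fin.cons 1 (fun j => x j.succ / x 0) := by
      funext i
      refine Fin.cases ?_ (fun j => ?_) i <;> simp [mul_div_cancel₀ _ hx]
    rw [map_mul, hscale, hp.eval_smul, ← eval_aeval_cons_one_X, h]
    simp
  have := (isHomogeneous_X k 0).mul hp |>.eq_zero_of_forall_eval_eq_zero hvanish
  exact (mul_eq_zero.mp this).resolve_left (X_ne_zero 0)

theorem eq_of_isHomogeneous_of_dehom_eq [Infinite k] {p q : MvPolynomial (Fin (n + 1)) k}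
    {d : ℕ} (hp : p.IsHomogeneous d) (hq : q.IsHomogeneous d)
    (h : dehom k n p = dehom k n q) : p = q :=
  sub_eq_zero.mp <|
    eq_zero_of_isHomogeneous_of_dehom_eq_zero (hp.sub hq) (by rw [map_sub, h, sub_self])

theorem Cremona.ext {f g : Cremona k n} (h : ∀ j, f (zCoord k n j) = g (zCoord k n j)) :
    f = g :=
  AlgEquiv.coe_toAlgHom_injective <| IsLocalization.algHom_ext (nonZeroDivisors _) <|
    MvPolynomial.algHom_ext h

end Dehomogenization

section CrossMultiplication

variable {k : Type} [Field k] [Infinite k] {n : ℕ}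

theorem dehom_head_ne_zero {ℓ : ℕ} {f : Cremona k n}
    {g : Fin (n + 1) → MvPolynomial (Fin (n + 1)) k} (hg : ∀ i, (g i).IsHomogeneous ℓ)
    (hne : ∃ i, g i ≠ 0)
    (hf : ∀ j, f (zCoord k n j) * dehom k n (g 0) = dehom k n (g j.succ)) :
    dehom k n (g 0) ≠ 0 := by
  intro h0
  obtain ⟨i, hi⟩ := hne
  refine hi (eq_zero_of_isHomogeneous_of_dehom_eq_zero (hg i) ?_)
  induction i using Fin.cases with
  | zero => exact h0
  | succ j => rw [← hf j, h0, mul_zero]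

theorem eq_iff_cross_mul_eq {ℓF ℓG : ℕ} {f g : Cremona k n}
    {F G : Fin (n + 1) → MvPolynomial (Fin (n + 1)) k}
    (hF : ∀ i, (F i).IsHomogeneous ℓF) (hG : ∀ i, (G i).IsHomogeneous ℓG)
    (hFne : ∃ i, F i ≠ 0) (hGne : ∃ i, G i ≠ 0)
    (hfF : ∀ j, f (zCoord k n j) * dehom k n (F 0) = dehom k n (F j.succ))
    (hgG : ∀ j, g (zCoord k n j) * dehom k n (G 0) = dehom k n (G j.succ)) :
    f = g ↔ ∀ j : Fin n, F j.succ * G 0 = F 0 * G j.succ := by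
  have hF0 := dehom_head_ne_zero hF hFne hfF
  have hG0 := dehom_head_ne_zero hG hGne hgG
  constructor
  · rintro rfl j
    refine eq_of_isHomogeneous_of_dehom_eq ((hF j.succ).mul (hG 0)) ((hF 0).mul (hG j.succ)) ?_
    rw [map_mul, map_mul, ← hfF j, ← hgG j]
    ring
  · intro hcross
    refine Cremona.ext fun j => mul_right_cancel₀ (mul_ne_zero hF0 hG0) ?_
    have h := congrArg (dehom k n) (hcross j)
    rw [map_mul, map_mul, ← hfF j, ← hgG j] at h
    linear_combination h

end CrossMultiplication

section Elimination

open MvPolynomial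

variable {k : Type*} [Field k]

def HasOnlyTrivialCommonZero {σ ι : Type*} (P : ι → MvPolynomial σ k) : Prop :=
  ∀ v : σ → k, (∀ i, eval v (P i) = 0) → v = 0

theorem exists_pow_idealOfVars_le_of_hasOnlyTrivialCommonZero [IsAlgClosed k] {σ ι : Type*}
    [Finite σ] (P : ι → MvPolynomial σ k) (h : HasOnlyTrivialCommonZero P) :
    ∃ E, idealOfVars σ k ^ E ≤ Ideal.span (Set.range P) := by
  refine Ideal.exists_pow_le_of_le_radical_of_fg ?_ (idealOfVars_fg σ k)
  rw [Ideal.span_le]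
  rintro _ ⟨i, rfl⟩
  rw [SetLike.mem_coe, ← vanishingIdeal_zeroLocus_eq_radical (K := k), mem_vanishingIdeal_iff]
  intro v hv
  obtain rfl : v = 0 := h v fun b => by simpa using hv _ (Ideal.subset_span ⟨b, rfl⟩)
  simp

theorem exists_ne_zero_forall_span_eq_top {A ι M : Type*} [CommRing A] [Fintype M]
    [DecidableEq M] (w : ι → M → A) (t₀ : A →+* k)
    (h : Submodule.span k (Set.range fun i => t₀ ∘ w i) = ⊤) :
    ∃ f : A, t₀ f ≠ 0 ∧ ∀ t : A →+* k, t f ≠ 0 →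
      Submodule.span k (Set.range fun i => t ∘ w i) = ⊤ := by
  obtain ⟨κ, a, -, hspan, hli⟩ := exists_linearIndependent' k fun i => t₀ ∘ w i
  let B : Module.Basis κ k (M → k) := .mk hli (by rw [hspan, h])
  let s : M → ι := a ∘ (B.indexEquiv (Pi.basisFun k M)).symm
  have hdet : ∀ t : A →+* k,
      (Pi.basisFun k M).det (fun ρ => t ∘ w (s ρ)) = t (Matrix.of fun μ ρ => w (s ρ) μ).det := by
    intro t
    rw [Module.Basis.det_apply, RingHom.map_det]
    congr 1
  refine ⟨(Matrix.of fun μ ρ => w (s ρ) μ).det, ?_, fun t ht => ?_⟩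
  · rw [← hdet, ← isUnit_iff_ne_zero, ← Module.Basis.is_basis_iff_det]
    have hB : (fun ρ => t₀ ∘ w (s ρ)) = B ∘ (B.indexEquiv (Pi.basisFun k M)).symm := by
      ext ρ
      simp [s, B]
    rw [hB]
    exact ⟨B.linearIndependent.comp _ (Equiv.injective _),
      by rw [Set.range_comp, Equiv.range_eq_univ, Set.image_univ, B.span_eq]⟩
  · rw [← hdet, isUnit_iff_ne_zero.symm.trans (Module.Basis.is_basis_iff_det _).symm] at ht
    exact top_unique <| ht.2.ge.trans <| Submodule.span_mono <|
      Set.range_subset_iff.mpr fun ρ => ⟨s ρ, rfl⟩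

theorem span_range_coeff_eq_top_iff {σ ι : Type*} [Finite σ] {E : ℕ}
    {P : ι → MvPolynomial σ k} (hP : ∀ i, (P i).IsHomogeneous E) :
    Submodule.span k (Set.range fun i (μ : {m : σ →₀ ℕ // m.degree = E}) => coeff μ.1 (P i)) = ⊤ ↔
      ∀ m : σ →₀ ℕ, m.degree = E → monomial m 1 ∈ Submodule.span k (Set.range P) := by
  classical
  have : Finite {m : σ →₀ ℕ // m.degree = E} := (Finsupp.finite_of_degree_eq E).to_subtype
  let c : MvPolynomial σ k →ₗ[k] {m : σ →₀ ℕ // m.degree = E} → k :=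
    LinearMap.pi fun μ => lcoeff k μ.1
  have hc : ∀ μ, c (monomial μ.1 1) = Pi.basisFun k _ μ := by
    intro μ
    ext ν
    simp [c, coeff_monomial, Pi.single_apply, Subtype.ext_iff, eq_comm]
  have hrange : (Set.range fun i (μ : {m : σ →₀ ℕ // m.degree = E}) => coeff μ.1 (P i)) =
      c '' Set.range P := by
    rw [← Set.range_comp]
    rfl
  rw [hrange, ← Submodule.map_span]
  constructor
  · intro htop m hm
    obtain ⟨q, hq, hcq⟩ : Pi.basisFun k _ ⟨m, hm⟩ ∈ (Submodule.span k (Set.range P)).map c :=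
      htop ▸ Submodule.mem_top
    have hqhom : q.IsHomogeneous E := by
      refine (Submodule.span_le (p := homogeneousSubmodule σ k E)).mpr ?_ hq
      rintro _ ⟨i, rfl⟩
      exact hP i
    rw [← hc ⟨m, hm⟩] at hcq
    suffices q = monomial m 1 from this ▸ hq
    ext ν
    by_cases hν : ν.degree = E
    · exact congrFun hcq ⟨ν, hν⟩
    · rw [hqhom.coeff_eq_zero hν, (isHomogeneous_monomial _ hm).coeff_eq_zero hν]
  · intro hmono
    rw [eq_top_iff, ← (Pi.basisFun k _).span_eq, Submodule.span_le]
    rintro _ ⟨μ, rfl⟩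
    rw [← hc]
    exact Submodule.mem_map_of_mem (hmono μ.1 μ.2)

theorem exists_ne_zero_forall_monomial_mem_span {A σ ι : Type*} [CommRing A] [Finite σ]
    {E : ℕ} {P : ι → MvPolynomial σ A} (hP : ∀ i, (P i).IsHomogeneous E) {t₀ : A →+* k}
    (h₀ : ∀ m : σ →₀ ℕ, m.degree = E →
      monomial m 1 ∈ Submodule.span k (Set.range fun i => map t₀ (P i))) :
    ∃ f : A, t₀ f ≠ 0 ∧ ∀ t : A →+* k, t f ≠ 0 → ∀ m : σ →₀ ℕ, m.degree = E →
      monomial m 1 ∈ Submodule.span k (Set.range fun i => map t (P i)) := by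
  classical
  have : Finite {m : σ →₀ ℕ // m.degree = E} := (Finsupp.finite_of_degree_eq _).to_subtype
  have : Fintype {m : σ →₀ ℕ // m.degree = E} := Fintype.ofFinite _
  have hcoeff : ∀ t : A →+* k, (fun i => t ∘ fun (μ : {m : σ →₀ ℕ // m.degree = E}) =>
      coeff μ.1 (P i)) = fun i μ => coeff μ.1 (map t (P i)) := by
    intro t
    simp only [Function.comp_def, coeff_map]
  obtain ⟨f, hf₀, hf⟩ := exists_ne_zero_forall_span_eq_top
    (fun i (μ : {m : σ →₀ ℕ // m.degree = E}) => coeff μ.1 (P i)) t₀ <| by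
      rwa [hcoeff, span_range_coeff_eq_top_iff fun i => (hP i).map t₀]
  refine ⟨f, hf₀, fun t ht => ?_⟩
  rw [← span_range_coeff_eq_top_iff fun i => (hP i).map t, ← hcoeff]
  exact hf t ht

/-- The main theorem of elimination theory. By the Nullstellensatz all monomials of some degree
lie in the ideal of the forms at `t₀`, hence in the span of the products `x^μ * H i` of that
degree; that spanning persists near `t₀`, and it forces every common zero to vanish. -/
theorem exists_ne_zero_forall_hasOnlyTrivialCommonZero [IsAlgClosed k] {A σ ι : Type*}
    [CommRing A] [Finite σ] {H : ι → MvPolynomial σ A} {dg : ι → ℕ}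
    (hH : ∀ i, (H i).IsHomogeneous (dg i)) {t₀ : A →+* k}
    (h₀ : HasOnlyTrivialCommonZero fun i => map t₀ (H i)) :
    ∃ f : A, t₀ f ≠ 0 ∧ ∀ t : A →+* k, t f ≠ 0 →
      HasOnlyTrivialCommonZero fun i => map t (H i) := by
  obtain ⟨E, hE⟩ := exists_pow_idealOfVars_le_of_hasOnlyTrivialCommonZero _ h₀
  let P : {q : ι × (σ →₀ ℕ) // q.2.degree + dg q.1 = E + 1} → MvPolynomial σ A :=
    fun q => monomial q.1.2 1 * H q.1.1
  have hmapP : ∀ (t : A →+* k) q, map t (P q) = monomial q.1.2 1 * map t (H q.1.1) := by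
    simp [P]
  have hP : ∀ q, (P q).IsHomogeneous (E + 1) := fun q =>
    q.2 ▸ (isHomogeneous_monomial 1 rfl).mul (hH q.1.1)
  obtain ⟨f, hf₀, hf⟩ := exists_ne_zero_forall_monomial_mem_span hP (t₀ := t₀) <| by
    intro m hm
    have hmem : monomial m (1 : k) ∈ Ideal.span (Set.range fun i => map t₀ (H i)) := by
      refine hE (Ideal.pow_le_pow_right E.le_succ ?_)
      rw [mem_pow_idealOfVars_iff]
      intro x hx
      rw [Finset.mem_singleton.mp (support_monomial_subset hx), hm]
    simpa only [hmapP] using mem_span_monomial_mul_of_mem_ideal_span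
      (fun i => (hH i).map t₀) (isHomogeneous_monomial 1 hm) hmem
  refine ⟨f, hf₀, fun t ht v hv => funext fun i => ?_⟩
  have hker : Submodule.span k (Set.range fun q => map t (P q)) ≤
      LinearMap.ker (aeval v).toLinearMap := by
    rw [Submodule.span_le]
    rintro _ ⟨q, rfl⟩
    simp [hmapP, hv]
  have hXi := hker (hf t ht (Finsupp.single i (E + 1)) (by simp))
  rw [LinearMap.mem_ker, ← X_pow_eq_monomial] at hXi
  simpa using hXi

end Elimination

section Incidence

open MvPolynomial

variable {k : Type} [Field k] {n N : ℕ}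

/-- A polynomial representation of `ψ` on the basic open set `{a ≠ 0}` of `ℙᴺ`. -/
structure ProjChart (ψ : Projectivization k (Fin (N + 1) → k) → Cremona k n) where
  r : ℕ
  ℓ : ℕ
  a : MvPolynomial (Fin (N + 1)) k
  G : Fin (n + 1) → MvPolynomial (Fin (n + 1)) (MvPolynomial (Fin (N + 1)) k)
  isHomogeneous_a : a.IsHomogeneous r
  isHomogeneous_G : ∀ i, (G i).IsHomogeneous ℓ
  isHomogeneous_coeff_G : ∀ i m, ((G i).coeff m).IsHomogeneous r
  exists_map_ne_zero : ∀ v : { v : Fin (N + 1) → k // v ≠ 0 }, eval v.1 a ≠ 0 →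
    ∃ i, map (eval v.1) (G i) ≠ 0
  represents : ∀ v : { v : Fin (N + 1) → k // v ≠ 0 }, eval v.1 a ≠ 0 → ∀ j : Fin n,
    ψ (Projectivization.mk' k v) (zCoord k n j) * dehom k n (map (eval v.1) (G 0)) =
      dehom k n (map (eval v.1) (G j.succ))

theorem IsProjMorphismOn.exists_projChart
    {ψ : Projectivization k (Fin (N + 1) → k) → Cremona k n}
    (hψ : IsProjMorphismOn k n N Set.univ ψ) (v : { v : Fin (N + 1) → k // v ≠ 0 }) :
    ∃ c : ProjChart ψ, eval v.1 c.a ≠ 0 := by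
  obtain ⟨r, ℓ, a, G, ha, hG, hGcoeff, hav, hrep⟩ := hψ _ (Set.mem_univ _)
  exact ⟨⟨r, ℓ, a, G, ha, hG, hGcoeff, fun w hw => (hrep _ w rfl trivial hw).1,
    fun w hw => (hrep _ w rfl trivial hw).2⟩, hav v rfl⟩

/-- The cross-multiplication identities `a (F_{j+1} G_0 - F_0 G_{j+1})` between a family `F`
over `A` and a chart `(a, G)`, as forms in `x` whose coefficients are forms over `A` in the
coordinates of `ℙᴺ`. The factor `a` makes them hold trivially off the chart. -/
noncomputable def crossMulForm {A : Type*} [CommRing A] [Algebra k A]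
    (F : Fin (n + 1) → MvPolynomial (Fin (n + 1)) A) (a : MvPolynomial (Fin (N + 1)) k)
    (G : Fin (n + 1) → MvPolynomial (Fin (n + 1)) (MvPolynomial (Fin (N + 1)) k)) (j : Fin n) :
    MvPolynomial (Fin (n + 1)) (MvPolynomial (Fin (N + 1)) A) :=
  map C (F j.succ) * map (map (algebraMap k A)) (C a * G 0) -
    map C (F 0) * map (map (algebraMap k A)) (C a * G j.succ)

variable {A : Type*} [CommRing A] [Algebra k A]

theorem isHomogeneous_coeff_crossMulForm (F : Fin (n + 1) → MvPolynomial (Fin (n + 1)) A)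
    {a : MvPolynomial (Fin (N + 1)) k} {r : ℕ} (ha : a.IsHomogeneous r)
    {G : Fin (n + 1) → MvPolynomial (Fin (n + 1)) (MvPolynomial (Fin (N + 1)) k)}
    (hG : ∀ i m, ((G i).coeff m).IsHomogeneous r) (j : Fin n) (m : Fin (n + 1) →₀ ℕ) :
    ((crossMulForm F a G j).coeff m).IsHomogeneous (r + r) := by
  have hF : ∀ i m', (coeff m' (map C (F i) :
      MvPolynomial _ (MvPolynomial (Fin (N + 1)) A))).IsHomogeneous 0 :=
    fun i m' => by simpa only [coeff_map] using isHomogeneous_C _ _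
  have haG : ∀ i m', (coeff m' (map (map (algebraMap k A)) (C a * G i))).IsHomogeneous (r + r) :=
    fun i m' => by simpa only [coeff_map, coeff_C_mul] using (ha.mul (hG i m')).map _
  rw [crossMulForm, coeff_sub, ← zero_add (r + r)]
  exact (isHomogeneous_coeff_mul (hF _) (haG _) m).sub (isHomogeneous_coeff_mul (hF _) (haG _) m)

theorem eval_map_coeff_crossMulForm (F : Fin (n + 1) → MvPolynomial (Fin (n + 1)) A)
    (a : MvPolynomial (Fin (N + 1)) k)
    (G : Fin (n + 1) → MvPolynomial (Fin (n + 1)) (MvPolynomial (Fin (N + 1)) k))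
    (j : Fin n) (m : Fin (n + 1) →₀ ℕ) (t : A →ₐ[k] k) (v : Fin (N + 1) → k) :
    eval v (map (t : A →+* k) ((crossMulForm F a G j).coeff m)) =
      eval v a * (map (t : A →+* k) (F j.succ) * map (eval v) (G 0) -
        map (t : A →+* k) (F 0) * map (eval v) (G j.succ)).coeff m := by
  have hC : ((eval v).comp (map (t : A →+* k))).comp C = t := by ext; simp
  have halg : ((eval v).comp (map (t : A →+* k))).comp (map (algebraMap k A)) = eval v := by
    ext <;> simp
  have ha : (eval v).comp (map (t : A →+* k)) (map (algebraMap k A) a) = eval v a :=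
    RingHom.congr_fun halg a
  rw [← RingHom.comp_apply, ← coeff_map, crossMulForm]
  simp only [map_sub, map_mul, map_map, hC, halg, map_C]
  rw [ha, ← coeff_C_mul]
  congr 1
  ring

variable {ψ : Projectivization k (Fin (N + 1) → k) → Cremona k n}

theorem ProjChart.forall_eval_crossMulForm_eq_zero_iff [Infinite k] (c : ProjChart ψ)
    {F : Fin (n + 1) → MvPolynomial (Fin (n + 1)) A} {ℓ : ℕ} (hF : ∀ i, (F i).IsHomogeneous ℓ)
    {t : A →ₐ[k] k} {f : Cremona k n} (hFt : ∃ i, map (t : A →+* k) (F i) ≠ 0)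
    (hfF : ∀ j, f (zCoord k n j) * dehom k n (map (t : A →+* k) (F 0)) =
      dehom k n (map (t : A →+* k) (F j.succ)))
    (v : { v : Fin (N + 1) → k // v ≠ 0 }) (hv : eval v.1 c.a ≠ 0) :
    (∀ j m, eval v.1 (map (t : A →+* k) ((crossMulForm F c.a c.G j).coeff m)) = 0) ↔
      f = ψ (Projectivization.mk' k v) := by
  rw [eq_iff_cross_mul_eq (fun i => (hF i).map _) (fun i => (c.isHomogeneous_G i).map _) hFt
    (c.exists_map_ne_zero v hv) hfF (c.represents v hv)]
  simp only [eval_map_coeff_crossMulForm, mul_eq_zero, hv, false_or]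
  refine forall_congr' fun j => ?_
  rw [← sub_eq_zero, MvPolynomial.ext_iff]
  simp

theorem mem_range_iff_not_hasOnlyTrivialCommonZero [Infinite k]
    (hψ : IsProjMorphismOn k n N Set.univ ψ) {S : AffSource k} {φ : S.Pts → Cremona k n}
    {a : S.A} {ℓ : ℕ} {F : Fin (n + 1) → MvPolynomial (Fin (n + 1)) S.A}
    (hF : IsFamilyOn k n S φ a ℓ F) {t : S.Pts} (ht : t a ≠ 0) :
    φ t ∈ Set.range ψ ↔ ¬ HasOnlyTrivialCommonZero fun b : ProjChart ψ × Fin n × _ =>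
      map (t : S.A →+* k) ((crossMulForm F b.1.a b.1.G b.2.1).coeff b.2.2) := by
  obtain ⟨hFt, hfF⟩ := hF.2 t ht
  simp only [HasOnlyTrivialCommonZero, not_forall, exists_prop]
  constructor
  · rintro ⟨w, hw⟩
    refine ⟨w.rep, fun ⟨c, j, m⟩ => ?_, w.rep_nonzero⟩
    by_cases hc : eval w.rep c.a = 0
    · rw [eval_map_coeff_crossMulForm, hc, zero_mul]
    · refine (c.forall_eval_crossMulForm_eq_zero_iff hF.1 hFt hfF ⟨w.rep, w.rep_nonzero⟩ hc).mpr
        ?_ j m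
      rw [Projectivization.mk'_eq_mk, Projectivization.mk_rep, hw]
  · rintro ⟨v, hv, hv0⟩
    obtain ⟨c, hc⟩ := hψ.exists_projChart ⟨v, hv0⟩
    exact ⟨_, ((c.forall_eval_crossMulForm_eq_zero_iff hF.1 hFt hfF ⟨v, hv0⟩ hc).mp
      fun j m => hv (c, j, m)).symm⟩

theorem exists_ne_zero_forall_not_mem_range [IsAlgClosed k]
    (hψ : IsProjMorphismOn k n N Set.univ ψ) {S : AffSource k} {φ : S.Pts → Cremona k n}
    {a : S.A} {ℓ : ℕ} {F : Fin (n + 1) → MvPolynomial (Fin (n + 1)) S.A}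
    (hF : IsFamilyOn k n S φ a ℓ F) {t₀ : S.Pts} (ha : t₀ a ≠ 0) (ht₀ : φ t₀ ∉ Set.range ψ) :
    ∃ f : S.A, t₀ f ≠ 0 ∧ ∀ t : S.Pts, t f ≠ 0 → φ t ∉ Set.range ψ := by
  obtain ⟨f, hf₀, hf⟩ := exists_ne_zero_forall_hasOnlyTrivialCommonZero
    (fun b : ProjChart ψ × Fin n × _ => isHomogeneous_coeff_crossMulForm F
      b.1.isHomogeneous_a b.1.isHomogeneous_coeff_G b.2.1 b.2.2)
    (not_not.mp <| (mem_range_iff_not_hasOnlyTrivialCommonZero hψ hF ha).not.mp ht₀)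
  refine ⟨a * f, by rw [map_mul]; exact mul_ne_zero ha hf₀, fun t ht => ?_⟩
  rw [map_mul, mul_ne_zero_iff] at ht
  exact (mem_range_iff_not_hasOnlyTrivialCommonZero hψ hF ht.1).not.mpr
    (not_not.mpr (hf t ht.2))

end Incidence

theorem image_of_projective_isClosed_general (k : Type) [Field k] [IsAlgClosed k]
    (n N : ℕ)
    (Z : Set (Projectivization k (Fin (N + 1) → k))) (hZ : IsClosed Z)
    (ψ : Projectivization k (Fin (N + 1) → k) → Cremona k n)
    (hψ : IsProjMorphismOn k n N Z ψ) :
    IsClosed (ψ '' Z) := by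
  rcases Projectivization.eq_empty_or_univ_of_isClosed hZ with rfl | rfl
  · rw [Set.image_empty]
    exact isClosed_empty
  rw [Set.image_univ, Cremona.isClosed_iff]
  intro S φ hφ
  rw [← isOpen_compl_iff, isOpen_iff_forall_mem_open]
  intro t₀ ht₀
  obtain ⟨a, ha, ℓ, F, hF⟩ := hφ t₀
  obtain ⟨f, hf₀, hf⟩ := exists_ne_zero_forall_not_mem_range hψ hF ha ht₀
  exact ⟨{t | t f ≠ 0}, hf, S.isOpen_setOf_ne_zero_s17 f, hf₀⟩

/-- The image of a projective `k`-variety under a morphism to `Bir(ℙⁿ)` is closed in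
the Zariski topology. -/
theorem image_of_projective_isClosed (k : Type) [Field k] [IsAlgClosed k]
    (n N : ℕ) (hn : 1 ≤ n)
    (Z : Set (Projectivization k (Fin (N + 1) → k))) (hZ : IsClosed Z)
    (ψ : Projectivization k (Fin (N + 1) → k) → Cremona k n)
    (hψ : IsProjMorphismOn k n N Z ψ) :
    IsClosed (ψ '' Z) :=
  image_of_projective_isClosed_general k n N Z hZ ψ hψ
end
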